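/- arXiv:math/0006141 — 3 statements merged into one kernel-verified Lean document; each statement's English description precedes it below -/
import Mathlib

section
/- There are no integers x₁, x₂, x₃ satisfying -9x₁² + 2x₁x₂ + 7x₂² + 2x₃² = 1. -/
lemma prime_dvd_aux (p : ℕ) (hp : p.Prime) (z : ℤ) (hdvd : (p : ℤ) ∣ 2 * z ^ 2 - 1) :
    p % 8 = 1 ∨ p % 8 = 7 := by
  haveI : Fact p.Prime := ⟨hp⟩
  have hp2 : p ≠ 2 := by
    rintro rfl
    obtain ⟨k, hk⟩ := hdvd
    omega
  have h0 : ((2 * z ^ 2 - 1 : ℤ) : ZMod p) = 0 :=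
    (ZMod.intCast_zmod_eq_zero_iff_dvd _ _).mpr hdvd
  push_cast at h0
  set w : ZMod p := (z : ZMod p) with hw
  have hw2 : 2 * w ^ 2 = 1 := by linear_combination h0
  have hwne : w ≠ 0 := by
    intro h
    rw [h] at hw2
    simp at hw2
  have hsq : IsSquare (2 : ZMod p) := by
    refine ⟨w⁻¹, ?_⟩
    have : w⁻¹ * w = 1 := inv_mul_cancel₀ hwne
    calc (2 : ZMod p) = (w⁻¹ * w) * (w⁻¹ * w) * 2 := by rw [this]; ring
    _ = w⁻¹ * w⁻¹ * (2 * w ^ 2) := by ring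
    _ = w⁻¹ * w⁻¹ := by rw [hw2]; ring
  exact (ZMod.exists_sq_eq_two_iff hp2).mp hsq

lemma nat_dvd_aux : ∀ n : ℕ, ∀ z : ℤ, (n : ℤ) ∣ 2 * z ^ 2 - 1 → n % 8 = 1 ∨ n % 8 = 7 := by
  intro n
  induction n using Nat.strong_induction_on with
  | _ n ih =>
    intro z hdvd
    rcases Nat.lt_or_ge n 2 with h2 | h2
    · interval_cases n
      · obtain ⟨k, hk⟩ := hdvd
        exfalso
        have : z ^ 2 ≥ 0 := sq_nonneg z
        omega
      · omega
    · have hn1 : n ≠ 1 := by omega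
      have hpp : n.minFac.Prime := Nat.minFac_prime hn1
      set p := n.minFac with hp
      have hpdvd : p ∣ n := Nat.minFac_dvd n
      obtain ⟨m, hm⟩ := hpdvd
      have hmdvd : (m : ℤ) ∣ 2 * z ^ 2 - 1 := by
        refine dvd_trans ?_ hdvd
        exact_mod_cast Dvd.intro_left p hm.symm
      have hmlt : m < n := by
        have hp1 : 1 < p := hpp.one_lt
        rcases Nat.eq_zero_or_pos m with rfl | hm0
        · omega
        · calc m < p * m := by nlinarith
          _ = n := hm.symm
      have hmres := ih m hmlt z hmdvd
      have hpres : p % 8 = 1 ∨ p % 8 = 7 := by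
        apply prime_dvd_aux p hpp z
        refine dvd_trans ?_ hdvd
        exact_mod_cast Dvd.intro m hm.symm
      have : n % 8 = (p % 8) * (m % 8) % 8 := by rw [hm, Nat.mul_mod]
      rcases hpres with h | h <;> rcases hmres with h' | h' <;>
        rw [h, h'] at this <;> omega

lemma int_dvd_aux (u : ℤ) (z : ℤ) (hdvd : u ∣ 2 * z ^ 2 - 1) :
    u % 8 = 1 ∨ u % 8 = 7 := by
  have h := nat_dvd_aux u.natAbs z (Int.natAbs_dvd.mpr hdvd)
  have habs := Int.natAbs_eq u
  have h8 : (u.natAbs : ℤ) % 8 = 1 ∨ (u.natAbs : ℤ) % 8 = 7 := by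
    rcases h with h | h <;> [left; right] <;> exact_mod_cast
      congrArg (Nat.cast : ℕ → ℤ) h
  omega

theorem f1_does_not_represent_one :
    ∀ x₁ x₂ x₃ : ℤ, -9 * x₁ ^ 2 + 2 * x₁ * x₂ + 7 * x₂ ^ 2 + 2 * x₃ ^ 2 ≠ 1 := by
  intro x₁ x₂ x₃ h
  set u : ℤ := 9 * x₁ + 7 * x₂ with hu
  set v : ℤ := x₁ - x₂ with hv
  have huv : u * v = 2 * x₃ ^ 2 - 1 := by rw [hu, hv]; linear_combination -h
  have hvres : v % 8 = 1 ∨ v % 8 = 7 :=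
    int_dvd_aux v x₃ ⟨u, by linarith [huv, mul_comm u v]⟩
  -- v^2 % 16 = 1
  have hq := Int.mul_ediv_add_emod v 8
  set q := v / 8 with hqdef
  set r := v % 8 with hrdef
  have hveq : v = 8 * q + r := by omega
  have hv2 : v ^ 2 - r ^ 2 = 16 * (4 * q ^ 2 + q * r) := by rw [hveq]; ring
  have hv2mod : v ^ 2 % 16 = 1 := by
    have hr2 : r ^ 2 = 1 ∨ r ^ 2 = 49 := by
      rcases hvres with h' | h' <;> [left; right] <;> rw [← hrdef] at * <;>
        rw [h'] <;> norm_num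
    generalize (4 * q ^ 2 + q * r) = A at hv2
    generalize v ^ 2 = B at hv2 ⊢
    omega
  -- x₃^2 % 8 ∈ {0,1,4}
  have hz := Int.mul_ediv_add_emod x₃ 4
  set q' := x₃ / 4 with hq'def
  set r' := x₃ % 4 with hr'def
  have hzeq : x₃ = 4 * q' + r' := by omega
  have hz2 : x₃ ^ 2 - r' ^ 2 = 8 * (2 * q' ^ 2 + q' * r') := by rw [hzeq]; ring
  have hr'range : r' = 0 ∨ r' = 1 ∨ r' = 2 ∨ r' = 3 := by omega
  have hr'2 : r' ^ 2 = 0 ∨ r' ^ 2 = 1 ∨ r' ^ 2 = 4 ∨ r' ^ 2 = 9 := by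
    rcases hr'range with h' | h' | h' | h' <;> rw [h'] <;> norm_num
  -- u * v = 16 * x₁ * v - 7 * v ^ 2
  have hkey : 2 * x₃ ^ 2 - 1 = 16 * (x₁ * v) - 7 * v ^ 2 := by
    rw [← huv, hu, hv]; ring
  generalize (2 * q' ^ 2 + q' * r') = C at hz2
  generalize hX : x₃ ^ 2 = X at hz2 hkey
  generalize (x₁ * v) = D at hkey
  generalize v ^ 2 = V at hv2mod hkey
  omega
end

section
/- For all integers x₁, x₂, x₃, if -9x₁² + 2x₁x₂ + 7x₂² + 2x₃² = 1, then x₁ - x₂ ≡ 3 (mod 8) or x₁ - x₂ ≡ -3 (mod 8). -/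
lemma aux16 : ∀ a b c : ZMod 16, -9 * a ^ 2 + 2 * a * b + 7 * b ^ 2 + 2 * c ^ 2 = 1 →
    a - b = 3 ∨ a - b = 5 ∨ a - b = 11 ∨ a - b = 13 := by decide

theorem diff_cong_pm_three_mod_eight :
    ∀ x₁ x₂ x₃ : ℤ, -9 * x₁ ^ 2 + 2 * x₁ * x₂ + 7 * x₂ ^ 2 + 2 * x₃ ^ 2 = 1 →
      x₁ - x₂ ≡ 3 [ZMOD 8] ∨ x₁ - x₂ ≡ -3 [ZMOD 8] := by
  intro x₁ x₂ x₃ h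
  have h16 : ((-9 * x₁ ^ 2 + 2 * x₁ * x₂ + 7 * x₂ ^ 2 + 2 * x₃ ^ 2 : ℤ) : ZMod 16) = 1 := by
    rw [h]; norm_num
  push_cast at h16
  have H := aux16 (x₁ : ZMod 16) (x₂ : ZMod 16) (x₃ : ZMod 16) h16
  have key : ∀ k : ℤ, ((x₁ - x₂ : ℤ) : ZMod 16) = (k : ZMod 16) → (x₁ - x₂) % 16 = k % 16 := by
    intro k hk
    exact (ZMod.intCast_eq_intCast_iff' _ _ _).mp hk
  push_cast at H
  simp only [Int.ModEq]
  rcases H with h3 | h5 | h11 | h13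
  · have := key 3 (by push_cast; exact h3); omega
  · have := key 5 (by push_cast; exact h5); omega
  · have := key 11 (by push_cast; exact h11); omega
  · have := key 13 (by push_cast; exact h13); omega
end

section
/- The quadratic form f₁(x₁,x₂,x₃) = -9x₁² + 2x₁x₂ + 7x₂² + 2x₃² represents 1 over the 2-adic integers ℤ₂; that is, there exist a, b, c ∈ ℤ₂ with -9a² + 2ab + 7b² + 2c² = 1. -/
/-! At `(a, b) = (4, 1)` the equation reads `c ^ 2 = 65`, and `65 ≡ 1 (mod 8)` is a square in `ℤ₂`
by Hensel's lemma for `X ^ 2 - 65` at `1`: the value `-64` has norm `2⁻⁶`, below the square `2⁻²` of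
the norm of the derivative `2`. -/

open Polynomial

namespace PadicInt

theorem isSquare_of_norm_sq_sub_lt {p : ℕ} [Fact p.Prime] {a d : ℤ_[p]}
    (h : ‖a ^ 2 - d‖ < ‖2 * a‖ ^ 2) : IsSquare d := by
  have hF : aeval a (X ^ 2 - C d) = a ^ 2 - d := by simp
  have hF' : aeval a (derivative (X ^ 2 - C d)) = 2 * a := by simp; norm_num
  obtain ⟨c, hc, -⟩ := hensels_lemma (F := X ^ 2 - C d) (a := a) (by rwa [hF, hF'])
  rw [aeval_sub, aeval_X_pow, aeval_C, Algebra.algebraMap_self_apply, sub_eq_zero] at hc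
  exact ⟨c, by rw [← hc, sq]⟩

theorem norm_two_eq_inv : ‖(2 : ℤ_[2])‖ = 2⁻¹ := by
  exact_mod_cast norm_p (p := 2)

theorem isSquare_intCast_of_eight_dvd_sub_one {d : ℤ} (h : 8 ∣ d - 1) :
    IsSquare (d : ℤ_[2]) := by
  refine isSquare_of_norm_sq_sub_lt (a := 1) ?_
  have hle : ‖((1 - d : ℤ) : ℤ_[2])‖ ≤ (2 : ℝ) ^ (-3 : ℤ) :=
    norm_int_le_pow_iff_dvd.mpr (by simpa [dvd_sub_comm] using h)
  push_cast at hle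
  rw [one_pow, mul_one, norm_two_eq_inv]
  refine hle.trans_lt ?_
  norm_num

end PadicInt

theorem f1_represents_one_over_Z2 :
    ∃ a b c : ℤ_[2], -9 * a ^ 2 + 2 * a * b + 7 * b ^ 2 + 2 * c ^ 2 = 1 := by
  obtain ⟨c, hc⟩ := PadicInt.isSquare_intCast_of_eight_dvd_sub_one (d := 65) (by norm_num)
  refine ⟨4, 1, c, ?_⟩
  push_cast at hc
  rw [sq c, ← hc]
  norm_num
end
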